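/- arXiv:1906.09353 — 3 statements merged into one kernel-verified Lean document; each statement's English description precedes it below -/
import Mathlib

section
/- Under the stated setup, suppose additionally that C^VCG is twice differentiable with (C^VCG)''(I) > 0 on the domain (so that (C^VCG)' is strictly increasing), that C^L is differentiable, and that Q(H(I)/N) > 0 and ∫₀^{Q(H(I)/N)} F(γ) dγ > 0 for all I in the domain. Let η̄ > 0 (the maximum marginal valuation of accuracy in the population) and let S > η̄ (the population sum of marginal valuations). If I^VCG, I^L, I^0 lie in the domain and satisfy (C^VCG)'(I^VCG) = η̄, (C^L)'(I^L) = η̄, and (C^VCG)'(I^0) = S, then I^VCG < I^L and I^VCG < I^0; consequently, since ε is strictly increasing, ε(I^VCG) < ε(I^0) (privacy protection is over-provided under private VCG provision). -/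
/-!
Integrating `∫₀^Q γ f(γ) dγ` by parts and using `F(Q(u)) = u` shows that the VCG cost exceeds the
Lindahl cost by the surplus `N · ε(I) · ∫₀^{Q(H(I)/N)} F`, a product of positive functions that
increase with `I`. Hence `(C^VCG)′ > (C^L)′ = η̄` at `I^L`. Since `(C^VCG)′` is strictly increasing
on the domain, which is an interval, its `η̄`-level `I^VCG` lies below `I^L`, and below `I^0`,
where it takes the larger value `S`.
-/

open Set Filter Topology

lemma strictMonoOn_of_hasDerivAt_pos {D : Set ℝ} (hD : Convex ℝ D) (hDo : IsOpen D)
    {f f' : ℝ → ℝ} (hf : ∀ x ∈ D, HasDerivAt f (f' x) x) (hf' : ∀ x ∈ D, 0 < f' x) :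
    StrictMonoOn f D :=
  strictMonoOn_of_deriv_pos hD (fun x hx => (hf x hx).continuousAt.continuousWithinAt)
    fun x hx => by
      rw [hDo.interior_eq] at hx
      exact (hf x hx).deriv ▸ hf' x hx

lemma lt_of_hasDerivAt_sub_eventuallyEq {f g φ : ℝ → ℝ} {f' g' φ' x : ℝ}
    (hf : HasDerivAt f f' x) (hg : HasDerivAt g g' x) (hφ : HasDerivAt φ φ' x) (hφ' : 0 < φ')
    (h : f - g =ᶠ[𝓝 x] φ) : g' < f' := by
  have := (hf.sub hg).unique (hφ.congr_of_eventuallyEq h)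
  linarith

lemma integral_id_mul_deriv {F f : ℝ → ℝ} {q : ℝ} (hq : 0 ≤ q)
    (hF : ∀ γ ∈ Ici (0 : ℝ), HasDerivAt F (f γ) γ) (hf : ContinuousOn f (Ici 0)) :
    ∫ γ in 0..q, γ * f γ = q * F q - ∫ γ in 0..q, F γ := by
  have hsub : uIcc 0 q ⊆ Ici 0 := by
    rw [uIcc_of_le hq]; exact Icc_subset_Ici_self
  simpa using intervalIntegral.integral_mul_deriv_eq_deriv_mul (fun x _ => hasDerivAt_id x)
    (fun x hx => hF x (hsub hx)) intervalIntegrable_const (hf.mono hsub).intervalIntegrable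

lemma hasDerivAt_integral_comp {F q : ℝ → ℝ} {q' x : ℝ} (hF : ContinuousOn F (Ici 0))
    (hqx : 0 < q x) (hq : HasDerivAt q q' x) :
    HasDerivAt (fun y => ∫ γ in 0..q y, F γ) (F (q x) * q') x := by
  have hsub : uIcc 0 (q x) ⊆ Ici 0 := by
    rw [uIcc_of_le hqx.le]; exact Icc_subset_Ici_self
  have hΦ : HasDerivAt (fun t => ∫ γ in 0..t, F γ) (F (q x)) (q x) :=
    intervalIntegral.integral_hasDerivAt_right (hF.mono hsub).intervalIntegrable
      ((hF.mono Ioi_subset_Ici_self).stronglyMeasurableAtFilter isOpen_Ioi _ hqx)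
      (hF.continuousAt (Ici_mem_nhds hqx))
  exact hΦ.comp x hq

lemma hasDerivAt_div_one_sub_mul (k : ℝ) {N x : ℝ} (hx : x ≠ 1) (hN : N ≠ 0) :
    HasDerivAt (fun y => k / ((1 - y) * N)) (k / ((1 - x) ^ 2 * N)) x := by
  have hx' : 1 - x ≠ 0 := sub_ne_zero.2 hx.symm
  refine ((hasDerivAt_const x k).div (((hasDerivAt_id x).const_sub 1).mul_const N)
    (mul_ne_zero hx' hN)).congr_deriv ?_
  simp only [id]
  field_simp
  ring

lemma hasDerivAt_one_sub_one_sub_div (k x : ℝ) :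
    HasDerivAt (fun y => 1 - (1 - y) / k) (1 / k) x := by
  simpa [neg_div] using (((hasDerivAt_id x).const_sub 1).div_const k).const_sub 1

lemma setOf_mem_Ioo_and_one_sub_div_mem_Ioo {k : ℝ} (hk : 0 < k) :
    {I : ℝ | I ∈ Ioo 0 1 ∧ 1 - (1 - I) / k ∈ Ioo 0 1} = Ioo (max 0 (1 - k)) 1 := by
  ext I
  simp only [mem_ofPred_eq, mem_Ioo, max_lt_iff, sub_pos, sub_lt_self_iff, div_lt_one hk,
    div_pos_iff_of_pos_right hk]
  constructor
  · rintro ⟨⟨h0, h1⟩, h2, -⟩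
    exact ⟨⟨h0, by linarith⟩, h1⟩
  · rintro ⟨⟨h0, h1⟩, h2⟩
    exact ⟨⟨h0, h2⟩, by linarith, by linarith⟩

lemma exists_hasDerivAt_surplus_pos {F Q : ℝ → ℝ} {Q' N k x : ℝ} (hN : 0 < N) (hk : 0 < k)
    (hx : x < 1) (hF : ContinuousOn F (Ici 0)) (hQ : HasDerivAt Q Q' (1 - (1 - x) / k))
    (hQ' : 0 < Q') (hFQ : 0 < F (Q (1 - (1 - x) / k))) (hQpos : 0 < Q (1 - (1 - x) / k))
    (hint : 0 ≤ ∫ γ in 0..Q (1 - (1 - x) / k), F γ) :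
    ∃ d, 0 < d ∧ HasDerivAt
      (fun y => N * (∫ γ in 0..Q (1 - (1 - y) / k), F γ) * (k / ((1 - y) * N))) d x := by
  have hΦ := hasDerivAt_integral_comp (q := fun y => Q (1 - (1 - y) / k)) hF hQpos
    (hQ.comp x (hasDerivAt_one_sub_one_sub_div k x))
  refine ⟨_, ?_, (hΦ.const_mul N).mul (hasDerivAt_div_one_sub_mul k hx.ne hN.ne')⟩
  have : 0 < 1 - x := sub_pos.2 hx
  positivity

theorem stmt_0_general (N k : ℝ) (hN : 0 < N)
    (H ε : ℝ → ℝ)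
    (hH : ∀ I, H I = N - (1 - I) * N / k)
    (hε : ∀ I, ε I = k / ((1 - I) * N))
    (F f Q Q' : ℝ → ℝ)
    (hFderiv : ∀ γ ∈ Set.Ici (0 : ℝ), HasDerivAt F (f γ) γ)
    (hfcont : ContinuousOn f (Set.Ici 0))
    (hFQ : ∀ u ∈ Set.Ioo (0 : ℝ) 1, F (Q u) = u)
    (hQderiv : ∀ u ∈ Set.Ioo (0 : ℝ) 1, HasDerivAt Q (Q' u) u)
    (hQ'pos : ∀ u ∈ Set.Ioo (0 : ℝ) 1, 0 < Q' u)
    (CVCG CL : ℝ → ℝ)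
    (hCVCG : ∀ I, CVCG I = Q (H I / N) * H I * ε I)
    (hCL : ∀ I, CL I = N * (∫ γ in (0 : ℝ)..Q (H I / N), γ * f γ) * ε I)
    (Dom : Set ℝ)
    (hDom : Dom = {I | I ∈ Set.Ioo (0 : ℝ) 1 ∧ H I / N ∈ Set.Ioo (0 : ℝ) 1})
    -- C^VCG is twice differentiable with strictly positive second derivative
    (CV' CV'' : ℝ → ℝ)
    (hCV' : ∀ I ∈ Dom, HasDerivAt CVCG (CV' I) I)
    (hCV'' : ∀ I ∈ Dom, HasDerivAt CV' (CV'' I) I)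
    (hconvex : ∀ I ∈ Dom, 0 < CV'' I)
    -- C^L is differentiable
    (CL' : ℝ → ℝ)
    (hCL' : ∀ I ∈ Dom, HasDerivAt CL (CL' I) I)
    -- positivity conditions on the domain
    (hQpos : ∀ I ∈ Dom, 0 < Q (H I / N))
    (hintpos : ∀ I ∈ Dom, 0 < ∫ γ in (0 : ℝ)..Q (H I / N), F γ)
    -- maximal and total marginal valuations of accuracy
    (etaBar S : ℝ) (hS : etaBar < S)
    -- equilibrium and optimal accuracy levels and their first-order conditions
    (IVCG IL I0 : ℝ)
    (hIVCG : IVCG ∈ Dom) (hIL : IL ∈ Dom) (hI0 : I0 ∈ Dom)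
    (hfocVCG : CV' IVCG = etaBar)
    (hfocL : CL' IL = etaBar)
    (hfoc0 : CV' I0 = S) :
    IVCG < IL ∧ IVCG < I0 ∧ ε IVCG < ε I0 := by
  have hHN : ∀ I, H I / N = 1 - (1 - I) / k := fun I => by rw [hH]; field_simp
  simp only [hHN] at hDom hCL hQpos hintpos
  have hu : ∀ I ∈ Dom, I ∈ Ioo 0 1 ∧ 1 - (1 - I) / k ∈ Ioo 0 1 := fun I hI => by
    rwa [hDom] at hI
  have hk : 0 < k := by
    obtain ⟨⟨-, h1⟩, -, h2⟩ := hu IVCG hIVCG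
    exact (div_pos_iff_of_pos_left (sub_pos.2 h1)).1 (by linarith)
  have hDomEq := hDom.trans (setOf_mem_Ioo_and_one_sub_div_mem_Ioo hk)
  have hDomOpen : IsOpen Dom := hDomEq ▸ isOpen_Ioo
  have hmono : StrictMonoOn CV' Dom :=
    strictMonoOn_of_hasDerivAt_pos (hDomEq ▸ convex_Ioo _ _) hDomOpen hCV'' hconvex
  have hsurplus : ∀ I ∈ Dom, CVCG I - CL I
      = N * (∫ γ in 0..Q (1 - (1 - I) / k), F γ) * (k / ((1 - I) * N)) := fun I hI => by
    rw [hCVCG, hCL, integral_id_mul_deriv (hQpos I hI).le hFderiv hfcont, ← hHN,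
      hFQ _ (hHN I ▸ (hu I hI).2), hε]
    field_simp
    ring
  obtain ⟨⟨-, hIL1⟩, huL⟩ := hu IL hIL
  obtain ⟨d, hd, hderiv⟩ := exists_hasDerivAt_surplus_pos hN hk hIL1
    (fun x hx => (hFderiv x hx).continuousAt.continuousWithinAt) (hQderiv _ huL)
    (hQ'pos _ huL) (by rw [hFQ _ huL]; exact huL.1) (hQpos IL hIL) (hintpos IL hIL).le
  have hL : etaBar < CV' IL := hfocL ▸ lt_of_hasDerivAt_sub_eventuallyEq (hCV' IL hIL)
    (hCL' IL hIL) hderiv hd (eventually_of_mem (hDomOpen.mem_nhds hIL) hsurplus)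
  have hVCG0 : IVCG < I0 := (hmono.lt_iff_lt hIVCG hI0).1 (by rw [hfocVCG, hfoc0]; exact hS)
  refine ⟨(hmono.lt_iff_lt hIVCG hIL).1 (hfocVCG ▸ hL), hVCG0, ?_⟩
  rw [hε, hε]
  gcongr
  exact mul_pos (sub_pos.2 (hu I0 hI0).1.2) hN

/-- Suboptimality of private provision of population statistics
(Theorem 1 of Abowd–Schmutte–Sexton–Vilhuber): with
`H(I) = N − (1−I)N/k`, `ε(I) = k/((1−I)N)`, VCG cost
`C^VCG(I) = Q(H(I)/N)·H(I)·ε(I)` and Lindahl cost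
`C^L(I) = N·(∫₀^{Q(H(I)/N)} γ·f(γ) dγ)·ε(I)` on the domain
`{I ∈ (0,1) : 0 < H(I)/N < 1}`, if `C^VCG` is twice differentiable with strictly
positive second derivative on the domain (so `(C^VCG)′` is strictly increasing),
`C^L` is differentiable on the domain, `Q(H(I)/N) > 0` and
`∫₀^{Q(H(I)/N)} F(γ) dγ > 0` on the domain, `η̄ > 0` and `S > η̄`, and
`I^VCG, I^L, I^0` lie in the domain with first-order conditions
`(C^VCG)′(I^VCG) = η̄`, `(C^L)′(I^L) = η̄` and `(C^VCG)′(I^0) = S`, then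
`I^VCG < I^L` and `I^VCG < I^0`; consequently, since `ε` is strictly increasing,
`ε(I^VCG) < ε(I^0)` (privacy protection is over-provided). -/
theorem stmt_0 (N β k : ℝ) (hN : 0 < N)
    (hβ : 0 < β ∧ β < 1 / (1 + Real.sqrt (Real.exp 1)))
    (hk : k = 1 / 2 + Real.log (1 / β))
    (H ε : ℝ → ℝ)
    (hH : ∀ I, H I = N - (1 - I) * N / k)
    (hε : ∀ I, ε I = k / ((1 - I) * N))
    (F f Q Q' : ℝ → ℝ)
    (hFmono : StrictMonoOn F (Set.Ici 0))
    (hFderiv : ∀ γ ∈ Set.Ici (0 : ℝ), HasDerivAt F (f γ) γ)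
    (hfcont : ContinuousOn f (Set.Ici 0))
    (hF0 : F 0 = 0)
    (hQnonneg : ∀ u ∈ Set.Ioo (0 : ℝ) 1, 0 ≤ Q u)
    (hFQ : ∀ u ∈ Set.Ioo (0 : ℝ) 1, F (Q u) = u)
    (hQderiv : ∀ u ∈ Set.Ioo (0 : ℝ) 1, HasDerivAt Q (Q' u) u)
    (hQ'pos : ∀ u ∈ Set.Ioo (0 : ℝ) 1, 0 < Q' u)
    (CVCG CL : ℝ → ℝ)
    (hCVCG : ∀ I, CVCG I = Q (H I / N) * H I * ε I)
    (hCL : ∀ I, CL I = N * (∫ γ in (0 : ℝ)..Q (H I / N), γ * f γ) * ε I)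
    (Dom : Set ℝ)
    (hDom : Dom = {I | I ∈ Set.Ioo (0 : ℝ) 1 ∧ H I / N ∈ Set.Ioo (0 : ℝ) 1})
    -- C^VCG is twice differentiable with strictly positive second derivative
    (CV' CV'' : ℝ → ℝ)
    (hCV' : ∀ I ∈ Dom, HasDerivAt CVCG (CV' I) I)
    (hCV'' : ∀ I ∈ Dom, HasDerivAt CV' (CV'' I) I)
    (hconvex : ∀ I ∈ Dom, 0 < CV'' I)
    -- C^L is differentiable
    (CL' : ℝ → ℝ)
    (hCL' : ∀ I ∈ Dom, HasDerivAt CL (CL' I) I)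
    -- positivity conditions on the domain
    (hQpos : ∀ I ∈ Dom, 0 < Q (H I / N))
    (hintpos : ∀ I ∈ Dom, 0 < ∫ γ in (0 : ℝ)..Q (H I / N), F γ)
    -- maximal and total marginal valuations of accuracy
    (etaBar S : ℝ) (hetaBar : 0 < etaBar) (hS : etaBar < S)
    -- equilibrium and optimal accuracy levels and their first-order conditions
    (IVCG IL I0 : ℝ)
    (hIVCG : IVCG ∈ Dom) (hIL : IL ∈ Dom) (hI0 : I0 ∈ Dom)
    (hfocVCG : CV' IVCG = etaBar)
    (hfocL : CL' IL = etaBar)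
    (hfoc0 : CV' I0 = S) :
    IVCG < IL ∧ IVCG < I0 ∧ ε IVCG < ε I0 :=
  stmt_0_general N k hN H ε hH hε F f Q Q' hFderiv hfcont hFQ hQderiv hQ'pos CVCG CL hCVCG hCL Dom
    hDom CV' CV'' hCV' hCV'' hconvex CL' hCL' hQpos hintpos etaBar S hS IVCG IL I0 hIVCG hIL hI0
    hfocVCG hfocL hfoc0
end

section
/- Under the stated setup, the Ghosh–Roth query release mechanism is (α,β)-accurate: μ{x ∈ ℝ : |ŝ(x) − s| ≤ α} ≥ 1 − β, where μ is the Laplace noise distribution with rate ε. -/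
/-! The published statistic differs from `s` by `(c - D + x) / N`, where `c = αN/(2k)` is the
offset added by the mechanism and `D ∈ [0, 2c]` is the sum of the omitted bits, so `|ŝ - s| ≤ α`
as soon as `|x| ≤ αN - c`. The Laplace mass of `[-t, t]` is `1 - exp (-εt)`, and the choice of
`ε` and `k` gives `ε (αN - c) = k - 1/2 = ln (1/β)`, making that mass exactly `1 - β`. -/

open MeasureTheory Real Set Finset

noncomputable def laplaceMeasure (ε : ℝ) : Measure ℝ :=
  volume.withDensity fun x => ENNReal.ofReal (ε / 2 * exp (-(ε * |x|)))

theorem intervalIntegral.integral_comp_abs_symm {f : ℝ → ℝ} {t : ℝ} (ht : 0 ≤ t)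
    (hf : IntervalIntegrable (fun x => f |x|) volume (-t) t) :
    ∫ x in -t..t, f |x| = 2 * ∫ x in 0..t, f x := by
  have hleft : IntervalIntegrable (fun x => f |x|) volume (-t) 0 :=
    hf.mono_set (uIcc_subset_uIcc_left (by simp [ht]))
  have hright : IntervalIntegrable (fun x => f |x|) volume 0 t :=
    hf.mono_set (uIcc_subset_uIcc_right (by simp [ht]))
  have habs : ∫ x in 0..t, f |x| = ∫ x in 0..t, f x :=
    integral_congr fun x hx => by rw [abs_of_nonneg (uIcc_of_le ht ▸ hx).1]
  have hneg : ∫ x in -t..0, f |x| = ∫ x in 0..t, f |x| := by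
    simpa using (integral_comp_neg (a := 0) (b := t) fun x => f |x|).symm
  rw [← integral_add_adjacent_intervals hleft hright, hneg, habs, two_mul]

theorem integral_half_mul_exp_neg_mul (ε t : ℝ) :
    ∫ x in 0..t, ε / 2 * exp (-(ε * x)) = (1 - exp (-(ε * t))) / 2 := by
  have hderiv : ∀ x ∈ uIcc 0 t,
      HasDerivAt (fun y => -exp (-(ε * y)) / 2) (ε / 2 * exp (-(ε * x))) x := fun x _ => by
    refine ((((hasDerivAt_id' x).const_mul ε).fun_neg.exp.fun_neg).div_const 2).congr_deriv ?_
    ring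
  rw [intervalIntegral.integral_eq_sub_of_hasDerivAt hderiv
    (Continuous.intervalIntegrable (by fun_prop) _ _)]
  simp only [mul_zero, neg_zero, exp_zero]; ring

theorem integral_laplaceDensity_symm (ε : ℝ) {t : ℝ} (ht : 0 ≤ t) :
    ∫ x in -t..t, ε / 2 * exp (-(ε * |x|)) = 1 - exp (-(ε * t)) := by
  rw [intervalIntegral.integral_comp_abs_symm (f := fun x => ε / 2 * exp (-(ε * x))) ht
    (Continuous.intervalIntegrable (by fun_prop) _ _), integral_half_mul_exp_neg_mul]
  ring

theorem laplaceMeasure_Icc_neg_self {ε : ℝ} (hε : 0 ≤ ε) {t : ℝ} (ht : 0 ≤ t) :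
    laplaceMeasure ε (Icc (-t) t) = ENNReal.ofReal (1 - exp (-(ε * t))) := by
  have hcont : Continuous fun x : ℝ => ε / 2 * exp (-(ε * |x|)) := by fun_prop
  rw [laplaceMeasure, withDensity_apply _ measurableSet_Icc,
    ← ofReal_integral_eq_lintegral_ofReal hcont.integrableOn_Icc
      (ae_of_all _ fun x => by positivity),
    integral_Icc_eq_integral_Ioc, ← intervalIntegral.integral_of_le (by linarith),
    integral_laplaceDensity_symm ε ht]

theorem sum_filter_not_val_lt_le {N H : ℕ} (hHN : H ≤ N) {b : Fin N → ℝ} (hb : ∀ i, b i ≤ 1) :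
    ∑ i ∈ univ.filter (fun i : Fin N => ¬ (i : ℕ) < H), b i ≤ N - H := by
  have hcard : #(univ.filter fun i : Fin N => ¬ (i : ℕ) < H) = N - H := by
    have := card_filter_add_card_filter_not (s := univ) (p := fun i : Fin N => (i : ℕ) < H)
    rw [Fin.card_filter_val_lt, card_univ, Fintype.card_fin, min_eq_right hHN] at this
    omega
  calc _ ≤ #(univ.filter fun i : Fin N => ¬ (i : ℕ) < H) • (1 : ℝ) :=
        sum_le_card_nsmul _ _ _ fun i _ => hb i
    _ = N - H := by rw [hcard, nsmul_one, Nat.cast_sub hHN]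

theorem abs_debiased_sub_le {N α c D x : ℝ} (S : ℝ) (hN : 0 < N) (hD : D ∈ Icc 0 (2 * c))
    (hx : |x| ≤ α * N - c) : |1 / N * (S + c + x) - 1 / N * (S + D)| ≤ α := by
  have hbias : |c - D| ≤ c := abs_le.mpr ⟨by linarith [hD.2], by linarith [hD.1]⟩
  rw [← mul_sub, show S + c + x - (S + D) = (c - D) + x by ring, abs_mul, abs_of_pos (by positivity),
    one_div_mul_eq_div, div_le_iff₀ hN]
  linarith [abs_add_le (c - D) x]

/-- (α,β)-accuracy of the Ghosh–Roth query release mechanism: publishing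
`ŝ(x) = (1/N)·(Σ_{i<H} bᵢ + αN/(2k) + x)` with `x` drawn from the Laplace
distribution with rate `ε = k/(αN)` (density `(ε/2)·exp(−ε·|x|)`), where
`k = 1/2 + ln(1/β)` and at most `αN/k` of the `N` bits are omitted, satisfies
`Pr[|ŝ − s| ≤ α] ≥ 1 − β` for the true proportion `s = (1/N)·Σᵢ bᵢ`. -/
theorem stmt_5 (N : ℕ) (hN : 0 < N) (α β k : ℝ)
    (hα : α ∈ Set.Ioo (0 : ℝ) 1) (hβ : β ∈ Set.Ioo (0 : ℝ) 1)
    (hk : k = 1 / 2 + Real.log (1 / β))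
    (b : Fin N → ℝ) (hb : ∀ i, b i = 0 ∨ b i = 1)
    (s : ℝ) (hs : s = (1 / (N : ℝ)) * ∑ i, b i)
    (H : ℕ) (hHN : H ≤ N) (hH : (N : ℝ) - (H : ℝ) ≤ α * N / k)
    (ε : ℝ) (hε : ε = k / (α * N))
    (μ : MeasureTheory.Measure ℝ)
    (hμ : μ = MeasureTheory.volume.withDensity
      (fun x => ENNReal.ofReal (ε / 2 * Real.exp (-(ε * |x|)))))
    (shat : ℝ → ℝ)
    (hshat : ∀ x, shat x = (1 / (N : ℝ)) *
      ((∑ i ∈ Finset.univ.filter (fun i : Fin N => (i : ℕ) < H), b i)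
        + α * N / (2 * k) + x)) :
    ENNReal.ofReal (1 - β) ≤ μ {x : ℝ | |shat x - s| ≤ α} := by
  obtain ⟨hα0, -⟩ := hα
  obtain ⟨hβ0, hβ1⟩ := hβ
  have hNpos : (0 : ℝ) < N := by exact_mod_cast hN
  have hαN : 0 < α * N := mul_pos hα0 hNpos
  have hlog : 0 < log (1 / β) := log_pos (one_lt_one_div hβ0 hβ1)
  have h2k : 1 < 2 * k := by linarith
  have hk0 : 0 < k := by linarith
  have hε0 : 0 ≤ ε := by rw [hε]; positivity
  set c := α * N / (2 * k) with hc_def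
  have hc : c ≤ α * N := div_le_self hαN.le h2k.le
  have hεt : ε * (α * N - c) = log (1 / β) := by
    rw [hε, hc_def]; field_simp; linarith
  have hbias : ∑ i ∈ univ.filter (fun i : Fin N => ¬ (i : ℕ) < H), b i ∈ Icc 0 (2 * c) := by
    have hb01 : ∀ i, 0 ≤ b i ∧ b i ≤ 1 := fun i => by rcases hb i with h | h <;> simp [h]
    refine ⟨sum_nonneg fun i _ => (hb01 i).1, ?_⟩
    calc _ ≤ (N : ℝ) - H := sum_filter_not_val_lt_le hHN fun i => (hb01 i).2
      _ ≤ α * N / k := hH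
      _ = 2 * c := by rw [hc_def]; field_simp
  have hsub : Icc (-(α * N - c)) (α * N - c) ⊆ {x | |shat x - s| ≤ α} := fun x hx => by
    rw [mem_ofPred_eq, hshat, hs, ← sum_filter_add_sum_filter_not univ (fun i : Fin N => (i : ℕ) < H)]
    exact abs_debiased_sub_le _ hNpos hbias (abs_le.mpr hx)
  calc ENNReal.ofReal (1 - β) = μ (Icc (-(α * N - c)) (α * N - c)) := by
        rw [hμ, ← laplaceMeasure, laplaceMeasure_Icc_neg_self hε0 (by linarith),
          hεt, exp_neg, exp_log (by positivity), one_div, inv_inv]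
    _ ≤ μ {x | |shat x - s| ≤ α} := measure_mono hsub
end

section
/- Let ε > 0, Δ ≥ 0, and let c, c′ be real numbers with |c − c′| ≤ Δ. Then for every measurable set B ⊆ ℝ, ∫_B (ε/2)·exp(−ε·|x − c|) dx ≤ exp(ε·Δ) · ∫_B (ε/2)·exp(−ε·|x − c′|) dx. In particular, adding Laplace noise with scale 1/ε to a real-valued query whose value changes by at most Δ between neighboring databases yields an (ε·Δ)-differentially private query release mechanism. -/
open MeasureTheory Real Set Filter

lemma lap0 (ε : ℝ) (hε : 0 < ε) :
    Integrable (fun x : ℝ => Real.exp (-(ε * |x|))) := by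
  apply LocallyIntegrable.integrable_of_isBigO_atTop_of_norm_isNegInvariant
    (g := fun x : ℝ => Real.exp (-ε * x))
  · exact (Continuous.locallyIntegrable (by continuity))
  · filter_upwards with x
    simp [Function.comp, abs_neg]
  · apply Asymptotics.IsBigO.of_bound 1
    filter_upwards [eventually_ge_atTop (0:ℝ)] with x hx
    simp [abs_of_nonneg hx, abs_of_nonneg (Real.exp_pos _).le, neg_mul]
  · exact ⟨Ioi 0, Ioi_mem_atTop 0, exp_neg_integrableOn_Ioi 0 hε⟩

lemma lap_integrable (ε c : ℝ) (hε : 0 < ε) :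
    Integrable (fun x : ℝ => Real.exp (-(ε * |x - c|))) :=
  (lap0 ε hε).comp_sub_right c

/-- Laplace mechanism privacy: if two centers `c, c′` (query answers on neighboring
databases) differ by at most `Δ`, then for every measurable set `B` the probability
that Laplace noise with scale `1/ε` centered at `c` lands in `B` is at most
`exp(ε·Δ)` times the corresponding probability for the center `c′`. -/
theorem stmt_8 (ε Δ c c' : ℝ) (hε : 0 < ε) (hΔ : 0 ≤ Δ) (hcc' : |c - c'| ≤ Δ)
    (B : Set ℝ) (hB : MeasurableSet B) :
    ∫ x in B, ε / 2 * Real.exp (-(ε * |x - c|)) ≤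
      Real.exp (ε * Δ) * ∫ x in B, ε / 2 * Real.exp (-(ε * |x - c'|)) := by
  have key : ∀ x : ℝ, ε / 2 * Real.exp (-(ε * |x - c|)) ≤
      Real.exp (ε * Δ) * (ε / 2 * Real.exp (-(ε * |x - c'|))) := by
    intro x
    rw [mul_left_comm]
    apply mul_le_mul_of_nonneg_left _ (by positivity)
    rw [← Real.exp_add]
    apply Real.exp_le_exp.2
    have h : |x - c| ≥ |x - c'| - Δ := by
      have := abs_sub_abs_le_abs_sub (x - c') (x - c)
      have h2 : |(x - c') - (x - c)| = |c - c'| := by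
        rw [show (x - c') - (x - c) = c - c' by ring]
      nlinarith [abs_nonneg (x - c)]
    nlinarith
  calc ∫ x in B, ε / 2 * Real.exp (-(ε * |x - c|))
      ≤ ∫ x in B, Real.exp (ε * Δ) * (ε / 2 * Real.exp (-(ε * |x - c'|))) := by
        apply setIntegral_mono_on
        · exact (((lap_integrable ε c hε).const_mul _).restrict)
        · exact ((((lap_integrable ε c' hε).const_mul _).const_mul _).restrict)
        · exact hB
        · exact fun x _ => key x
    _ = Real.exp (ε * Δ) * ∫ x in B, ε / 2 * Real.exp (-(ε * |x - c'|)) := by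
        rw [integral_const_mul]
end
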